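/- Let p be an odd integer. Then for every integer j, the odd partial Kummer sum for q = 4, namely Σ_{ν odd, 0 ≤ ν ≤ 7} ζ_8^{jν − pν³}, vanishes if and only if j is even or j ≡ 3p (mod 4). Equivalently, 𝔓(p/4) = { j ∈ [0,7] ∩ ℤ : (j ≡ 0 mod 2) ∪ (j ≡ 3p mod 4) }. -/

import Mathlib

/-- ζ_m = exp(2πi/m), the primitive m-th root of unity. -/
noncomputable def zeta (m : ℕ) : ℂ := Complex.exp (2 * Real.pi * Complex.I / (m : ℂ))

/-!
Every odd `ν` satisfies `ν² ≡ 1 (mod 8)`, so on odd `ν` the cubic phase `jν - pν³` agrees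
with the linear phase `(j - p)ν` modulo 8. The sum therefore becomes `w + w³ + w⁵ + w⁷` with
`w = ζ₈^(j-p)`, that is `w` times the geometric sum of the fourth root of unity `w² = ζ₄^(j-p)`,
which vanishes exactly when `w² ≠ 1`, i.e. when `4 ∤ j - p`. For odd `p` this means that `j` is
even or `j ≡ p + 2 ≡ 3p (mod 4)`.
-/

open Finset

theorem isPrimitiveRoot_zeta {m : ℕ} (hm : m ≠ 0) : IsPrimitiveRoot (zeta m) m :=
  Complex.isPrimitiveRoot_exp m hm

theorem Finset.sum_filter_odd_range_two_mul {M : Type*} [AddCommMonoid M] (f : ℕ → M) (n : ℕ) :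
    ∑ ν ∈ (range (2 * n)).filter Odd, f ν = ∑ i ∈ range n, f (2 * i + 1) := by
  induction n with
  | zero => simp
  | succ n ih =>
    rw [show 2 * (n + 1) = 2 * n + 1 + 1 by ring, range_add_one, range_add_one,
      filter_insert, if_pos (odd_two_mul_add_one n), filter_insert,
      if_neg (Nat.not_odd_iff_even.mpr (even_two_mul n)), sum_insert (by simp),
      sum_range_succ, ← ih, add_comm]

theorem geom_sum_eq_zero_iff_ne_one {R : Type*} [Ring R] [NoZeroDivisors R] [CharZero R]
    {x : R} {n : ℕ} (hn : n ≠ 0) (hx : x ^ n = 1) :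
    ∑ i ∈ range n, x ^ i = 0 ↔ x ≠ 1 := by
  constructor
  · rintro h rfl
    simp [hn] at h
  · intro hx1
    have := geom_sum_mul x n
    rw [hx, sub_self, mul_eq_zero] at this
    exact this.resolve_right (sub_ne_zero.mpr hx1)

theorem zpow_mul_sub_mul_cube_of_odd {G₀ : Type*} [GroupWithZero G₀] {z : G₀} (hz : z ^ 8 = 1)
    (j p : ℤ) {ν : ℤ} (hν : Odd ν) : z ^ (j * ν - p * ν ^ 3) = z ^ ((j - p) * ν) := by
  obtain ⟨c, hc⟩ := Int.eight_dvd_sq_sub_one_of_odd hν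
  have hz0 : z ≠ 0 := by rintro rfl; simp at hz
  rw [show j * ν - p * ν ^ 3 = (j - p) * ν + 8 * (-p * ν * c) by linear_combination (-p * ν) * hc,
    zpow_add₀ hz0, zpow_mul z 8, show z ^ (8 : ℤ) = 1 by exact_mod_cast hz, one_zpow, mul_one]

theorem Int.not_four_dvd_sub_iff_even_or_modEq {p : ℤ} (hp : Odd p) (j : ℤ) :
    ¬ 4 ∣ j - p ↔ Even j ∨ j ≡ 3 * p [ZMOD 4] := by
  obtain ⟨m, rfl⟩ := hp
  rw [Int.even_iff, Int.ModEq]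
  omega

/-- For an odd integer p and every integer j, the odd partial Kummer
sum for q = 4, namely Σ_{ν odd, 0 ≤ ν ≤ 7} ζ_8^{jν − pν³}, vanishes if and only if
j is even or j ≡ 3p (mod 4). -/
theorem points_of_constancy_q_four (p : ℤ) (hp : Odd p) (j : ℤ) :
    (∑ ν ∈ (Finset.range 8).filter (fun ν => Odd ν),
        zeta 8 ^ (j * (ν : ℤ) - p * (ν : ℤ) ^ 3)) = 0 ↔
    (Even j ∨ j ≡ 3 * p [ZMOD 4]) := by
  have hζ : IsPrimitiveRoot (zeta 8) 8 := isPrimitiveRoot_zeta (by norm_num)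
  set w := zeta 8 ^ (j - p)
  have hsum : (∑ ν ∈ (range 8).filter (fun ν => Odd ν), zeta 8 ^ (j * (ν : ℤ) - p * (ν : ℤ) ^ 3))
      = w * ∑ i ∈ range 4, (w ^ 2) ^ i := by
    rw [show 8 = 2 * 4 from rfl, sum_filter_odd_range_two_mul, mul_sum]
    refine sum_congr rfl fun i _ => ?_
    rw [zpow_mul_sub_mul_cube_of_odd hζ.pow_eq_one j p (by simp), zpow_mul, ← pow_mul,
      ← pow_succ', zpow_natCast]
  have hw0 : w ≠ 0 := zpow_ne_zero _ (hζ.ne_zero (by norm_num))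
  have hw4 : (w ^ 2) ^ 4 = 1 := by
    rw [← pow_mul, ← zpow_natCast, ← zpow_mul, mul_comm, zpow_mul, hζ.zpow_eq_one, one_zpow]
  have hw2 : w ^ 2 = 1 ↔ 4 ∣ j - p := by
    rw [← zpow_natCast, ← zpow_mul, hζ.zpow_eq_one_iff_dvd]
    omega
  rw [hsum, mul_eq_zero, or_iff_right hw0, geom_sum_eq_zero_iff_ne_one (by norm_num) hw4, Ne, hw2]
  exact Int.not_four_dvd_sub_iff_even_or_modEq hp j
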